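/- arXiv:2502.07379 — 2 statements merged into one kernel-verified Lean document; each statement's English description precedes it below -/
import Mathlib

section
/- Let n be an odd natural number whose binary expansion contains no two consecutive 1's. Let r satisfy 2^r <= n < 2^(r+1) and set m = 2^(r+1) - 1 - n. Then choose(m, (n-1)/2) is odd and choose(m, (n+1)/2) is even; consequently, (n-1)/2 is the least natural number L such that for every j >= L with 2j + 2 <= n, choose(m, j+1)*choose(m, j+1) + choose(m, j)*choose(m, j+2) is even. -/
/-!
By Lucas' theorem, `choose m k` is odd iff the binary digits of `k` are among those of `m`.
Since `m = 2^(r+1) - 1 - n` is the bitwise complement of `n`, `choose m k` is odd iff `k` and `n`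
have disjoint digits. Having no two consecutive 1's says exactly that `n / 2 = (n - 1) / 2` and `n`
are disjoint, so `choose m ((n-1)/2)` is odd; and `m` is even while `(n + 1) / 2` is odd (bit 1 of
`n` vanishes), so `choose m ((n+1)/2)` is even. For `j = (n-1)/2 - 1` the quantity
`choose(m,j+1)^2 + choose(m,j)*choose(m,j+2)` is then odd, while no `j ≥ (n-1)/2` has
`2j + 2 ≤ n`.
-/

namespace Nat

theorem odd_choose_iff_testBit {m k : ℕ} :
    Odd (m.choose k) ↔ ∀ i, k.testBit i = true → m.testBit i = true := by
  induction m using Nat.strong_induction_on generalizing k with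
  | _ m ih =>
  rcases m.eq_zero_or_pos with rfl | hm
  · have hk : (∀ i, k.testBit i = true → (0 : ℕ).testBit i = true) ↔ k = 0 :=
      ⟨fun h => zero_of_testBit_eq_false fun i => by simpa using h i, by rintro rfl; simp⟩
    rw [hk]
    cases k <;> simp
  have lucas : Odd (m.choose k) ↔ Odd ((m % 2).choose (k % 2)) ∧ Odd ((m / 2).choose (k / 2)) := by
    rw [← odd_mul, odd_iff, odd_iff, Choose.choose_modEq_choose_mod_mul_choose_div_nat (p := 2)]
  have low_digit : Odd ((m % 2).choose (k % 2)) ↔ (k.testBit 0 = true → m.testBit 0 = true) := by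
    rcases mod_two_eq_zero_or_one m with hm2 | hm2 <;>
      rcases mod_two_eq_zero_or_one k with hk2 | hk2 <;> simp [testBit_zero, hm2, hk2]
  rw [lucas, low_digit, ih (m / 2) (by omega)]
  simp only [testBit_div_two]
  exact ⟨fun ⟨h0, h⟩ i => i.casesOn h0 h, fun h => ⟨h 0, fun i => h (i + 1)⟩⟩

theorem odd_choose_two_pow_sub_one_sub {s n k : ℕ} (hn : n < 2 ^ s) (hk : k < 2 ^ s)
    (hdisj : ∀ i, k.testBit i = true → n.testBit i = false) :
    Odd ((2 ^ s - 1 - n).choose k) := by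
  refine odd_choose_iff_testBit.2 fun i hi => ?_
  have his : i < s :=
    (Nat.pow_lt_pow_iff_right (by norm_num)).1 ((ge_two_pow_of_testBit hi).trans_lt hk)
  rw [Nat.sub_sub, add_comm, testBit_two_pow_sub_succ hn]
  simp [his, hdisj i hi]

theorem even_choose_of_even_of_odd {m k : ℕ} (hm : Even m) (hk : Odd k) : Even (m.choose k) := by
  rw [← not_odd_iff_even, odd_choose_iff_testBit]
  intro h
  simpa [testBit_zero, even_iff.1 hm, odd_iff.1 hk] using h 0

end Nat

theorem fold_thom_bound_case_b_general (n r : ℕ) (hodd : Odd n)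
    (hnoconsec : ∀ j : ℕ, ¬(Nat.testBit n j = true ∧ Nat.testBit n (j + 1) = true))
    (hr' : n < 2 ^ (r + 1))
    (m : ℕ) (hm : m = 2 ^ (r + 1) - 1 - n) :
    Odd (Nat.choose m ((n - 1) / 2)) ∧ Even (Nat.choose m ((n + 1) / 2)) ∧
      IsLeast {L : ℕ | ∀ j : ℕ, L ≤ j → 2 * j + 2 ≤ n →
        Even (Nat.choose m (j + 1) * Nat.choose m (j + 1) +
          Nat.choose m j * Nat.choose m (j + 2))} ((n - 1) / 2) := by
  have hn2 := Nat.odd_iff.1 hodd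
  have half_even : n / 2 % 2 = 0 := by
    have := hnoconsec 0
    rw [← Nat.testBit_div_two, Nat.testBit_zero, Nat.testBit_zero] at this
    simp only [hn2, decide_true, true_and, decide_eq_true_eq] at this
    omega
  have odd_half : Odd (m.choose (n / 2)) := hm ▸ Nat.odd_choose_two_pow_sub_one_sub hr' (by omega)
    fun i hi => by rw [Nat.testBit_div_two] at hi; simpa [hi] using hnoconsec i
  have even_half_succ : Even (m.choose (n / 2 + 1)) := by
    refine Nat.even_choose_of_even_of_odd ?_ ?_
    · have := pow_succ' 2 r
      rw [Nat.even_iff]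
      omega
    · exact Nat.odd_iff.2 (by omega)
  rw [show (n - 1) / 2 = n / 2 by omega, show (n + 1) / 2 = n / 2 + 1 by omega]
  refine ⟨odd_half, even_half_succ, fun j hj hjn => by omega, fun L hL => ?_⟩
  by_contra! hlt
  obtain ⟨j, hj⟩ : ∃ j, n / 2 = j + 1 := ⟨n / 2 - 1, by omega⟩
  rw [hj] at odd_half even_half_succ hlt
  exact Nat.not_even_iff_odd.2 ((odd_half.mul odd_half).add_even (even_half_succ.mul_left _))
    (hL j (by omega) (by omega))

/-- Theorem 5.9, case b) (`n` odd, no two consecutive binary 1's):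
`choose m ((n-1)/2)` is odd and `choose m ((n+1)/2)` is even; consequently `(n-1)/2`
is the least `L` such that for all `j ≥ L` with `2j+2 ≤ n` the number
`choose(m,j+1)^2 + choose(m,j)*choose(m,j+2)` is even. -/
theorem fold_thom_bound_case_b (n r : ℕ) (hodd : Odd n)
    (hnoconsec : ∀ j : ℕ, ¬(Nat.testBit n j = true ∧ Nat.testBit n (j + 1) = true))
    (hr : 2 ^ r ≤ n) (hr' : n < 2 ^ (r + 1))
    (m : ℕ) (hm : m = 2 ^ (r + 1) - 1 - n) :
    Odd (Nat.choose m ((n - 1) / 2)) ∧ Even (Nat.choose m ((n + 1) / 2)) ∧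
      IsLeast {L : ℕ | ∀ j : ℕ, L ≤ j → 2 * j + 2 ≤ n →
        Even (Nat.choose m (j + 1) * Nat.choose m (j + 1) +
          Nat.choose m j * Nat.choose m (j + 2))} ((n - 1) / 2) :=
  fold_thom_bound_case_b_general n r hodd hnoconsec hr' m hm
end

section
/- Let n be a positive even natural number whose binary expansion contains no two consecutive 1's, let p be the largest natural number with 2^p dividing n (so p >= 1), and set alpha = n/2 - 2^(p-1). Then for every natural number j with j <= 2^p - 2, the binomial coefficient choose(alpha + 2^p - 1, j + 1) is odd and the binomial coefficient choose(alpha + j, j + 1) is even. -/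
/-! Since bit `p` of `n` is set and bit `p + 1` is not, `n = 2^p (4s + 1)` and
`alpha = 2^(p+1) s`. For `b, k < 2^(p+1)`, Lucas's theorem makes `choose (2^(p+1) s + b) k`
congruent to `choose b k` mod 2, so the two coefficients have the parities of
`choose (2^p - 1) (j + 1)`, odd because every binary digit of `2^p - 1` is 1, and of
`choose j (j + 1) = 0`. -/

theorem Choose.choose_pow_mul_add_modEq_choose_nat {p : ℕ} [Fact p.Prime] (q : ℕ) {a b k : ℕ}
    (hb : b < p ^ q) (hk : k < p ^ q) : (p ^ q * a + b).choose k ≡ b.choose k [MOD p] := by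
  induction q generalizing b k with
  | zero => simp_all [Nat.ModEq.refl]
  | succ q ih =>
    have hp : 0 < p := (Fact.out : p.Prime).pos
    have hmod : (p ^ (q + 1) * a + b) % p = b % p := by
      rw [pow_succ', mul_assoc, Nat.mul_add_mod]
    have hdiv : (p ^ (q + 1) * a + b) / p = p ^ q * a + b / p := by
      rw [pow_succ', mul_assoc, Nat.mul_add_div hp]
    have hlt {x : ℕ} (hx : x < p ^ (q + 1)) : x / p < p ^ q :=
      Nat.div_lt_of_lt_mul (by rwa [mul_comm, ← pow_succ])
    calc (p ^ (q + 1) * a + b).choose k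
        ≡ (b % p).choose (k % p) * (p ^ q * a + b / p).choose (k / p) [MOD p] := by
          rw [← hmod, ← hdiv]; exact Choose.choose_modEq_choose_mod_mul_choose_div_nat
      _ ≡ (b % p).choose (k % p) * (b / p).choose (k / p) [MOD p] :=
          (ih (hlt hb) (hlt hk)).mul_left _
      _ ≡ b.choose k [MOD p] := Choose.choose_modEq_choose_mod_mul_choose_div_nat.symm

theorem Nat.odd_choose_two_pow_sub_one {q k : ℕ} (hk : k < 2 ^ q) :
    Odd ((2 ^ q - 1).choose k) := by
  induction q generalizing k with
  | zero => simp_all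
  | succ q ih =>
    have h2q : 2 ^ (q + 1) = 2 * 2 ^ q := Nat.pow_succ'
    have hmod : (2 ^ (q + 1) - 1) % 2 = 1 := by omega
    have hdiv : (2 ^ (q + 1) - 1) / 2 = 2 ^ q - 1 := by omega
    have hone : (1 : ℕ).choose (k % 2) = 1 := Nat.choose_eq_one_iff.mpr (by omega)
    have hlucas : (2 ^ (q + 1) - 1).choose k ≡ (2 ^ q - 1).choose (k / 2) [MOD 2] := by
      have := Choose.choose_modEq_choose_mod_mul_choose_div_nat (n := 2 ^ (q + 1) - 1) (k := k)
        (p := 2)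
      rwa [hmod, hdiv, hone, one_mul] at this
    rw [Nat.odd_iff, hlucas, ← Nat.odd_iff]
    exact ih (by omega)

theorem Nat.testBit_of_two_pow_dvd_of_not_dvd {n p : ℕ} (hp : 2 ^ p ∣ n)
    (hp' : ¬ 2 ^ (p + 1) ∣ n) : n.testBit p = true := by
  obtain ⟨m, rfl⟩ := hp
  have hm : ¬ 2 ∣ m := by rwa [pow_succ, Nat.mul_dvd_mul_iff_left (Nat.two_pow_pos p)] at hp'
  simp [Nat.testBit_eq_decide_div_mod_eq, Nat.mul_div_cancel_left _ (Nat.two_pow_pos p)]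
  omega

theorem Nat.mod_two_pow_add_two_eq_two_pow {n p : ℕ} (hp : 2 ^ p ∣ n)
    (hbit : n.testBit p = true) (hbit' : n.testBit (p + 1) = false) : n % 2 ^ (p + 2) = 2 ^ p := by
  rw [Nat.testBit_eq_decide_div_mod_eq, decide_eq_true_iff] at hbit
  rw [Nat.testBit_eq_decide_div_mod_eq, decide_eq_false_iff_not, ← ne_eq,
    Nat.mod_two_ne_one] at hbit'
  rw [Nat.mod_pow_succ, Nat.mod_pow_succ, Nat.mod_eq_zero_of_dvd hp, hbit, hbit']
  simp

theorem sigma2_euler_binomials_general (n p : ℕ)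
    (hnoconsec : ∀ j : ℕ, ¬(Nat.testBit n j = true ∧ Nat.testBit n (j + 1) = true))
    (hp : 2 ^ p ∣ n) (hp' : ¬ 2 ^ (p + 1) ∣ n) (hp1 : 1 ≤ p)
    (alpha : ℕ) (halpha : alpha = n / 2 - 2 ^ (p - 1)) :
    ∀ j : ℕ, j ≤ 2 ^ p - 2 →
      Odd (Nat.choose (alpha + 2 ^ p - 1) (j + 1)) ∧
        Even (Nat.choose (alpha + j) (j + 1)) := by
  intro j hj
  have hbit : n.testBit p = true := Nat.testBit_of_two_pow_dvd_of_not_dvd hp hp'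
  have hbit' : n.testBit (p + 1) = false := by simpa [hbit] using hnoconsec p
  obtain ⟨s, rfl⟩ : ∃ s, n = 2 ^ (p + 2) * s + 2 ^ p := ⟨n / 2 ^ (p + 2), by
    rw [← Nat.mod_two_pow_add_two_eq_two_pow hp hbit hbit', Nat.div_add_mod]⟩
  have halpha' : alpha = 2 ^ (p + 1) * s := by
    obtain ⟨r, rfl⟩ : ∃ r, p = r + 1 := ⟨p - 1, by omega⟩
    have hhalf : 2 ^ (r + 1 + 2) * s + 2 ^ (r + 1) = 2 * (2 ^ (r + 2) * s + 2 ^ r) := by ring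
    rw [halpha, hhalf, Nat.mul_div_cancel_left _ two_pos, Nat.add_sub_cancel, Nat.add_sub_cancel]
  have hjp : j + 1 < 2 ^ p := by
    have : 2 ^ 1 ≤ 2 ^ p := Nat.pow_le_pow_right two_pos hp1
    omega
  have hpp : 2 ^ p < 2 ^ (p + 1) := Nat.pow_lt_pow_succ one_lt_two
  constructor
  · rw [halpha', Nat.add_sub_assoc Nat.one_le_two_pow, Nat.odd_iff,
      Choose.choose_pow_mul_add_modEq_choose_nat (p + 1) (by omega) (by omega), ← Nat.odd_iff]
    exact Nat.odd_choose_two_pow_sub_one hjp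
  · rw [halpha', Nat.even_iff,
      Choose.choose_pow_mul_add_modEq_choose_nat (p + 1) (by omega) (by omega),
      Nat.choose_eq_zero_of_lt j.lt_succ_self]

/-- The binomial-parity lemma from the proof of Theorem 6.3: for even `n > 0` with no
two consecutive binary 1's, `p` the 2-adic valuation of `n` (`p ≥ 1`) and
`alpha = n/2 - 2^(p-1)`, for every `j ≤ 2^p - 2` the coefficient
`choose (alpha + 2^p - 1) (j+1)` is odd and `choose (alpha + j) (j+1)` is even. -/
theorem sigma2_euler_binomials (n p : ℕ) (hn : 0 < n) (heven : 2 ∣ n)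
    (hnoconsec : ∀ j : ℕ, ¬(Nat.testBit n j = true ∧ Nat.testBit n (j + 1) = true))
    (hp : 2 ^ p ∣ n) (hp' : ¬ 2 ^ (p + 1) ∣ n) (hp1 : 1 ≤ p)
    (alpha : ℕ) (halpha : alpha = n / 2 - 2 ^ (p - 1)) :
    ∀ j : ℕ, j ≤ 2 ^ p - 2 →
      Odd (Nat.choose (alpha + 2 ^ p - 1) (j + 1)) ∧
        Even (Nat.choose (alpha + j) (j + 1)) :=
  sigma2_euler_binomials_general n p hnoconsec hp hp' hp1 alpha halpha
end
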